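/- arXiv:2011.09866 — 2 statements merged into one kernel-verified Lean document; each statement's English description precedes it below -/
import Mathlib

section
/- There exists a class ℒ of recursive languages such that ℒ ∈ [ℛTxtTdCIndEx_C]_REC but ℒ ∉ [τ(CInd)TxtGBc_C]_REC; that is, some total computable transductive learner CIndEx_C-learns every member of ℒ, but no partial computable Gold-style (full-information) learner that outputs only C-indices on all texts whatsoever can Bc_C-learn every member of ℒ. -/
namespace InductiveInference

/-- `φ_e` : the `e`-th partial computable function, via the standard numbering
of `Nat.Partrec.Code`. -/
def phi (e : ℕ) : ℕ →. ℕ := (Denumerable.ofNat Nat.Partrec.Code e).eval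

/-- `W_e` : the domain of `φ_e`. -/
def Wset (e : ℕ) : Set ℕ := (phi e).Dom

/-- `e` is a C-index: `φ_e` is total with values in `{0,1}`. -/
def CIndex (e : ℕ) : Prop := ∀ x, phi e x = Part.some 0 ∨ phi e x = Part.some 1

/-- `C_e = {x | φ_e x = 1}`. -/
def Cset (e : ℕ) : Set ℕ := {x | phi e x = Part.some 1}

/-- A language is recursive (decidable). -/
def RecLang (L : Set ℕ) : Prop := ∃ f : ℕ → Bool, Computable f ∧ ∀ x, x ∈ L ↔ f x = true

/-- Texts: total functions `ℕ → ℕ ∪ {#}`; `none` is the pause symbol `#`. -/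
abbrev Text := ℕ → Option ℕ

/-- The content of a text: its range minus the pause symbol. -/
def content (T : Text) : Set ℕ := {x | ∃ n, T n = some x}

/-- The initial segment `T[n] = (T 0, …, T (n-1))`. -/
def initSeg (T : Text) (n : ℕ) : List (Option ℕ) := (List.range n).map T

/-- The (finite) content of the initial segment `T[n]`. -/
def fincontent (T : Text) (n : ℕ) : Finset ℕ := ((initSeg T n).filterMap id).toFinset

/-- A canonical numerical code for a finite set of naturals. -/
def setCode (D : Finset ℕ) : ℕ := Encodable.encode (D.sort (· ≤ ·))

/-- Learners: partial functions on (suitably coded) natural number inputs. -/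
abbrev Learner := ℕ →. ℕ

/-- The learner is partial computable. -/
def PartComputable (h : Learner) : Prop := Nat.Partrec h

/-- The learner is total computable. -/
def TotalComputable (h : Learner) : Prop := Nat.Partrec h ∧ ∀ x, (h x).Dom

/-- Hypothesis sequences (possibly undefined at some points). -/
abbrev HypSeq := ℕ → Part ℕ

/-- Gold-style (full-information) learning: `G(h,T)(i) = h(T[i])`. -/
def Gop (h : Learner) (T : Text) (i : ℕ) : Part ℕ :=
  h (Encodable.encode (initSeg T i))

/-- Partially set-driven learning: `Psd(h,T)(i) = h(content T[i], i)`. -/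
def Psdop (h : Learner) (T : Text) (i : ℕ) : Part ℕ :=
  h (Nat.pair (setCode (fincontent T i)) i)

/-- Set-driven learning: `Sd(h,T)(i) = h(content T[i])`. -/
def Sdop (h : Learner) (T : Text) (i : ℕ) : Part ℕ :=
  h (setCode (fincontent T i))

/-- Iterative learning: the input `none` codes the empty start sequence `ε`,
and `some (e, x)` codes the pair of previous hypothesis `e` and datum `x`. -/
def Itop (h : Learner) (T : Text) : ℕ → Part ℕ
  | 0 => h (Encodable.encode (none : Option (ℕ × Option ℕ)))
  | i + 1 => (Itop h T i).bind fun e =>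
      h (Encodable.encode (some (e, T i) : Option (ℕ × Option ℕ)))

/-- Transductive learning: the learner receives the single (coded) datum
`T i`; the output `0` codes the distinguished symbol `?`, and the output
`e + 1` codes the hypothesis `e`.  The value `?` of the hypothesis sequence
is represented by `Part.none`. -/
def Tdop (h : Learner) (T : Text) : ℕ → Part ℕ
  | 0 => Part.none
  | i + 1 => (h (Encodable.encode (T i))).bind fun v =>
      match v with
      | 0 => Tdop h T i
      | e + 1 => Part.some e

/-- `Ex_C`: syntactic convergence to a single correct C-index. -/
def ExC (p : HypSeq) (T : Text) : Prop :=
  ∃ n₀, (∀ n, n₀ ≤ n → p n = p n₀) ∧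
    ∃ e, p n₀ = Part.some e ∧ CIndex e ∧ Cset e = content T

/-- `Ex_W`: syntactic convergence to a single correct W-index. -/
def ExW (p : HypSeq) (T : Text) : Prop :=
  ∃ n₀, (∀ n, n₀ ≤ n → p n = p n₀) ∧
    ∃ e, p n₀ = Part.some e ∧ Wset e = content T

/-- `Bc_C`: semantic convergence to correct C-indices. -/
def BcC (p : HypSeq) (T : Text) : Prop :=
  ∃ n₀, ∀ n, n₀ ≤ n → ∃ e, p n = Part.some e ∧ CIndex e ∧ Cset e = content T

/-- `Bc_W`: semantic convergence to correct W-indices. -/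
def BcW (p : HypSeq) (T : Text) : Prop :=
  ∃ n₀, ∀ n, n₀ ≤ n → ∃ e, p n = Part.some e ∧ Wset e = content T

/-- `CInd`: every hypothesis output is a C-index. -/
def CIndRes (p : HypSeq) (_T : Text) : Prop :=
  ∀ i e, p i = Part.some e → CIndex e

/-- `T`: the always-true restriction. -/
def TrueRes (_p : HypSeq) (_T : Text) : Prop := True

abbrev InteractionOp := Learner → Text → HypSeq
abbrev Restriction := HypSeq → Text → Prop

/-- Conjunction of restrictions. -/
def andRes (δ δ' : Restriction) : Restriction := fun p T => δ p T ∧ δ' p T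

/-- `h` `Txtβδ`-learns `L`: on every text for `L` the restriction `δ` holds. -/
def Learns (β : InteractionOp) (δ : Restriction) (h : Learner) (L : Set ℕ) : Prop :=
  ∀ T : Text, content T = L → δ (β h T) T

/-- The restriction `α` holds for `h` on all texts whatsoever. -/
def OnAllTexts (β : InteractionOp) (α : Restriction) (h : Learner) : Prop :=
  ∀ T : Text, α (β h T) T

/-- A class of recursive languages. -/
def IsRecClass (ℒ : Set (Set ℕ)) : Prop := ∀ L ∈ ℒ, RecLang L

/-- `[𝒞Txtβδ]_REC`: classes of recursive languages learnable by some
learner from `C` under interaction operator `β` and restriction `δ`. -/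
def LearnableREC (C : Learner → Prop) (β : InteractionOp) (δ : Restriction) :
    Set (Set (Set ℕ)) :=
  {ℒ | IsRecClass ℒ ∧ ∃ h, C h ∧ ∀ L ∈ ℒ, Learns β δ h L}

/-- `[τ(α)𝒞Txtβδ]_REC`: as above, where additionally `α` must hold on
arbitrary texts. -/
def TauLearnableREC (C : Learner → Prop) (α : Restriction) (β : InteractionOp)
    (δ : Restriction) : Set (Set (Set ℕ)) :=
  {ℒ | IsRecClass ℒ ∧ ∃ h, C h ∧ OnAllTexts β α h ∧ ∀ L ∈ ℒ, Learns β δ h L}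

/-!
The separating class consists of the languages `C_e` containing `⟨1, e⟩` as their only element of
the form `⟨1, _⟩`. A transductive learner waits for that element and then outputs `e` forever.

Against a Gold-style learner `h` that outputs only C-indices, the recursion theorem provides a
C-index `E` of the content of a text generated by diagonalization. The text starts with `⟨1, E⟩`;
afterwards the generator dovetails a search for a hypothesis `c` of `h` on ever longer initial
segments. Once it finds one, it waits for `φ_c ⟨0, m⟩`, at a fresh `m`, which halts because `c` is a
C-index, and puts `⟨0, m⟩` into the text iff `φ_c` rejects it, so that `C_c` is wrong. Every other
`⟨0, m⟩` is left out for good, so membership is decided once the fresh counter has passed it. If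
the search eventually fails forever, `h` diverges on all long initial segments; otherwise `h` is
wrong on arbitrarily long ones. Either way `h` does not Bc_C-learn the content of the text.
-/

open Nat.Partrec (Code)
open Nat.Partrec.Code

lemma phi_partrec (e : ℕ) : Partrec (phi e) :=
  eval_part.comp (Computable.const _) Computable.id

lemma CIndex.dom {e : ℕ} (he : CIndex e) (x : ℕ) : (phi e x).Dom := by
  rcases he x with h | h <;> simp [h]

lemma recLang_cset {e : ℕ} (he : CIndex e) : RecLang (Cset e) := by
  have hdom : ∀ x, ((phi e x).map fun v => decide (v = 1)).Dom := fun x => by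
    simpa using he.dom x
  have hpart : Partrec fun x => (phi e x).map fun v => decide (v = 1) :=
    (phi_partrec e).map
      (Computable.to₂ ((Primrec.eq.comp Primrec.snd (Primrec.const 1)).decide.to_comp))
  refine ⟨fun x => ((phi e x).map fun v => decide (v = 1)).get (hdom x),
    hpart.of_eq fun x => (Part.some_get (hdom x)).symm, fun x => ?_⟩
  rw [Part.get_eq_iff_eq_some]
  rcases he x with h | h <;> simp [Cset, h]

lemma cIndex_and_cset_eq_of_phi_eq_indicator {e : ℕ} {L : Set ℕ}
    (he : ∀ x, phi e x = Part.some (L.indicator 1 x)) : CIndex e ∧ Cset e = L := by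
  refine ⟨fun x => ?_, Set.ext fun x => ?_⟩
  · by_cases hx : x ∈ L <;> simp [he, hx]
  · by_cases hx : x ∈ L <;> simp [Cset, he, hx]

section Transductive

variable {h : Learner} {T : Text} {e : ℕ}

lemma tdop_eq_none_or_eq_some
    (hT : ∀ i, h (Encodable.encode (T i)) = Part.some 0 ∨
      h (Encodable.encode (T i)) = Part.some (e + 1)) :
    ∀ n, Tdop h T n = Part.none ∨ Tdop h T n = Part.some e
  | 0 => Or.inl rfl
  | n + 1 => by
    rcases hT n with h0 | he
    · simp only [Tdop, h0, Part.bind_some]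
      exact tdop_eq_none_or_eq_some hT n
    · simp [Tdop, he]

lemma tdop_eq_some_of_lt
    (hT : ∀ i, h (Encodable.encode (T i)) = Part.some 0 ∨
      h (Encodable.encode (T i)) = Part.some (e + 1))
    {i₀ : ℕ} (hi₀ : h (Encodable.encode (T i₀)) = Part.some (e + 1)) :
    ∀ n, i₀ < n → Tdop h T n = Part.some e
  | 0, hn => absurd hn (Nat.not_lt_zero _)
  | n + 1, hn => by
    rcases hT n with h0 | he
    · have hlt : i₀ < n := lt_of_le_of_ne (Nat.lt_succ_iff.1 hn) fun h => by
        subst h; simp [hi₀] at h0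
      simp only [Tdop, h0, Part.bind_some]
      exact tdop_eq_some_of_lt hT hi₀ n hlt
    · simp [Tdop, he]

end Transductive

def selfNamingClass : Set (Set ℕ) :=
  {L | ∃ e, CIndex e ∧ Cset e = L ∧ Nat.pair 1 e ∈ L ∧
      ∀ x ∈ L, (Nat.unpair x).1 = 1 → x = Nat.pair 1 e}

/-- Reads the datum `x`, coded as `x + 1` (`0` codes the pause), and outputs `e + 1` (the
hypothesis `e`) if `x = ⟨1, e⟩`, and `0` (the symbol `?`) otherwise. -/
def nameReader : ℕ → ℕ
  | 0 => 0
  | x + 1 => if (Nat.unpair x).1 = 1 then (Nat.unpair x).2 + 1 else 0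

lemma nameReader_primrec : Primrec nameReader := by
  have h : Primrec fun x : ℕ => if (Nat.unpair x).1 = 1 then (Nat.unpair x).2 + 1 else 0 :=
    Primrec.ite (Primrec.eq.comp (Primrec.fst.comp Primrec.unpair) (Primrec.const 1))
      (Primrec.succ.comp (Primrec.snd.comp Primrec.unpair)) (Primrec.const 0)
  exact (Primrec.nat_casesOn₁ 0 h).of_eq fun n => by cases n <;> rfl

def nameLearner : Learner := fun n => Part.some (nameReader n)

lemma totalComputable_nameLearner : TotalComputable nameLearner :=
  ⟨Partrec.nat_iff.1 nameReader_primrec.to_comp, fun _ => trivial⟩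

theorem selfNamingClass_mem_learnableREC :
    selfNamingClass ∈ LearnableREC TotalComputable Tdop (andRes CIndRes ExC) := by
  refine ⟨?_, _, totalComputable_nameLearner, ?_⟩
  · rintro L ⟨e, he, rfl, -, -⟩
    exact recLang_cset he
  rintro L ⟨e, he, hC, hname, huniq⟩ T rfl
  have hT : ∀ i, nameLearner (Encodable.encode (T i)) = Part.some 0 ∨
      nameLearner (Encodable.encode (T i)) = Part.some (e + 1) := by
    intro i
    rcases hTi : T i with _ | x
    · exact Or.inl rfl
    by_cases hx : (Nat.unpair x).1 = 1
    · rw [huniq x ⟨i, hTi⟩ hx]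
      simp [nameLearner, nameReader]
    · simp [nameLearner, nameReader, hx]
  obtain ⟨i₀, hi₀⟩ := hname
  have hsome := tdop_eq_some_of_lt hT (i₀ := i₀) (by simp [hi₀, nameLearner, nameReader])
  refine ⟨fun j e' hj => ?_, i₀ + 1, fun n hn => ?_, e, hsome _ (Nat.lt_succ_self _), he, hC⟩
  · rcases tdop_eq_none_or_eq_some hT j with h | h <;> rw [h] at hj
    · exact absurd hj (by simp)
    · exact Part.some_inj.1 hj ▸ he
  · rw [hsome n hn, hsome _ (Nat.lt_succ_self _)]

/-- A configuration of the diagonalizing text generator. `trace` is the text generated so far.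
While `waiting`, it waits for `φ_hyp ⟨0, fresh⟩`, where `hyp` is the learner's hypothesis on the
first `base` data of the text; otherwise it searches for a hypothesis on a longer initial segment. -/
structure Config where
  trace : List (Option ℕ)
  waiting : Bool
  base : ℕ
  hyp : ℕ
  fresh : ℕ

namespace Config

def equivProd : Config ≃ List (Option ℕ) × Bool × ℕ × ℕ × ℕ where
  toFun S := (S.trace, S.waiting, S.base, S.hyp, S.fresh)
  invFun p := ⟨p.1, p.2.1, p.2.2.1, p.2.2.2.1, p.2.2.2.2⟩
  left_inv _ := rfl
  right_inv _ := rfl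

instance : Primcodable Config := Primcodable.ofEquiv _ equivProd

lemma primrec_trace : Primrec trace := Primrec.fst.comp Primrec.of_equiv

lemma primrec_waiting : Primrec waiting := Primrec.fst.comp (Primrec.snd.comp Primrec.of_equiv)

lemma primrec_base : Primrec base :=
  Primrec.fst.comp (Primrec.snd.comp (Primrec.snd.comp Primrec.of_equiv))

lemma primrec_hyp : Primrec hyp :=
  Primrec.fst.comp (Primrec.snd.comp (Primrec.snd.comp (Primrec.snd.comp Primrec.of_equiv)))

lemma primrec_fresh : Primrec fresh :=
  Primrec.snd.comp (Primrec.snd.comp (Primrec.snd.comp (Primrec.snd.comp Primrec.of_equiv)))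

lemma primrec_mk {α : Type*} [Primcodable α] {f₁ : α → List (Option ℕ)} {f₂ : α → Bool}
    {f₃ f₄ f₅ : α → ℕ} (h₁ : Primrec f₁) (h₂ : Primrec f₂) (h₃ : Primrec f₃) (h₄ : Primrec f₄)
    (h₅ : Primrec f₅) : Primrec fun a => Config.mk (f₁ a) (f₂ a) (f₃ a) (f₄ a) (f₅ a) :=
  Primrec.of_equiv_symm.comp (h₁.pair (h₂.pair (h₃.pair (h₄.pair h₅))))

end Config

namespace Generator

open Config

variable (ch : Code)

/-- Dovetailing: a trace of length `⟨i, s⟩` runs the learner for `s` steps on its first `i` data,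
provided `base < i`. -/
def query (S : Config) : Option ℕ :=
  if S.base < (Nat.unpair S.trace.length).1 then
    evaln (Nat.unpair S.trace.length).2 ch
      (Encodable.encode (S.trace.take (Nat.unpair S.trace.length).1))
  else none

def answer (S : Config) : Option ℕ :=
  evaln S.trace.length (Denumerable.ofNat Code S.hyp) (Nat.pair 0 S.fresh)

def step (S : Config) : Config :=
  if S.waiting then
    match answer S with
    | none => { S with trace := S.trace ++ [none] }
    | some v =>
      { S with trace := S.trace ++ [if v = 0 then some (Nat.pair 0 S.fresh) else none],
               waiting := false, fresh := S.fresh + 1 }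
  else
    match query ch S with
    | none => { S with trace := S.trace ++ [none], fresh := S.fresh + 1 }
    | some c =>
      { S with trace := S.trace ++ [none], waiting := true,
               base := (Nat.unpair S.trace.length).1, hyp := c }

def start (E : ℕ) : Config := ⟨[some (Nat.pair 1 E)], false, 0, 0, 0⟩

def run (E t : ℕ) : Config := (step ch)^[t] (start E)

def text (E : ℕ) : Text := fun n => (run ch E n).trace.getLastD none

lemma primrec_query : Primrec (query ch) := by
  have hlen : Primrec fun S : Config => Nat.unpair S.trace.length :=
    Primrec.unpair.comp (Primrec.list_length.comp primrec_trace)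
  exact Primrec.ite (Primrec.nat_lt.comp primrec_base (Primrec.fst.comp hlen))
    (primrec_evaln.comp (((Primrec.snd.comp hlen).pair (Primrec.const ch)).pair
      (Primrec.encode.comp (Primrec.list_take.comp (Primrec.fst.comp hlen) primrec_trace))))
    (Primrec.const none)

lemma primrec_answer : Primrec answer :=
  primrec_evaln.comp (((Primrec.list_length.comp primrec_trace).pair
    ((Primrec.ofNat Code).comp primrec_hyp)).pair
      (Primrec₂.natPair.comp (Primrec.const 0) primrec_fresh))

lemma primrec_step : Primrec (step ch) := by
  have happend {f : Config → Option ℕ} (hf : Primrec f) :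
      Primrec fun S : Config => S.trace ++ [f S] := Primrec.list_concat.comp primrec_trace hf
  have hleave : Primrec₂ fun (S : Config) (v : ℕ) =>
      ({ S with trace := S.trace ++ [if v = 0 then some (Nat.pair 0 S.fresh) else none],
                waiting := false, fresh := S.fresh + 1 } : Config) :=
    primrec_mk (Primrec.list_concat.comp (primrec_trace.comp Primrec.fst)
        (Primrec.ite (Primrec.eq.comp Primrec.snd (Primrec.const 0))
          (Primrec.option_some.comp (Primrec₂.natPair.comp (Primrec.const 0)
            (primrec_fresh.comp Primrec.fst))) (Primrec.const none)))
      (Primrec.const false) (primrec_base.comp Primrec.fst) (primrec_hyp.comp Primrec.fst)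
      (Primrec.succ.comp (primrec_fresh.comp Primrec.fst))
  have henter : Primrec₂ fun (S : Config) (c : ℕ) =>
      ({ S with trace := S.trace ++ [none], waiting := true,
                base := (Nat.unpair S.trace.length).1, hyp := c } : Config) :=
    primrec_mk ((happend (Primrec.const none)).comp Primrec.fst) (Primrec.const true)
      (Primrec.fst.comp (Primrec.unpair.comp
        (Primrec.list_length.comp (primrec_trace.comp Primrec.fst))))
      Primrec.snd (primrec_fresh.comp Primrec.fst)
  have hwait := Primrec.option_casesOn primrec_answer
    (primrec_mk (happend (Primrec.const none)) primrec_waiting primrec_base primrec_hyp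
      primrec_fresh) hleave
  have hsearch := Primrec.option_casesOn (primrec_query ch)
    (primrec_mk (happend (Primrec.const none)) primrec_waiting primrec_base primrec_hyp
      (Primrec.succ.comp primrec_fresh)) henter
  refine (Primrec.ite (Primrec.eq.comp primrec_waiting (Primrec.const true)) hwait hsearch).of_eq
    fun S => ?_
  unfold step
  split <;> split <;> simp_all

lemma primrec_run : Primrec₂ (run ch) := by
  have hstart : Primrec start :=
    primrec_mk (Primrec.list_cons.comp (Primrec.option_some.comp
        (Primrec₂.natPair.comp (Primrec.const 1) Primrec.id)) (Primrec.const []))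
      (Primrec.const false) (Primrec.const 0) (Primrec.const 0) (Primrec.const 0)
  exact Primrec.nat_iterate Primrec.snd (hstart.comp Primrec.fst)
    ((primrec_step ch).comp Primrec.snd).to₂

section Step

variable {ch : Code} {S : Config}

lemma step_trace : ∃ a, (step ch S).trace = S.trace ++ [a] := by
  unfold step; split <;> split <;> exact ⟨_, rfl⟩

lemma fresh_le_fresh_step : S.fresh ≤ (step ch S).fresh := by
  unfold step; split <;> split <;> simp

lemma query_eq_some_iff {c : ℕ} : query ch S = some c ↔
    S.base < (Nat.unpair S.trace.length).1 ∧ evaln (Nat.unpair S.trace.length).2 ch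
      (Encodable.encode (S.trace.take (Nat.unpair S.trace.length).1)) = some c := by
  unfold query; split_ifs with h <;> simp [h]

lemma base_le_base_step : S.base ≤ (step ch S).base := by
  unfold step
  split
  · split <;> rfl
  · split
    · rfl
    · next hq => exact (query_eq_some_iff.1 hq).1.le

lemma of_waiting_step (h : (step ch S).waiting) :
    (S.waiting ∧ answer S = none ∧ (step ch S).hyp = S.hyp ∧ (step ch S).base = S.base ∧
      (step ch S).fresh = S.fresh) ∨
    (¬S.waiting ∧ query ch S = some (step ch S).hyp ∧
      (step ch S).base = (Nat.unpair S.trace.length).1) := by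
  unfold step at *
  split at h <;> split at h <;> simp_all

lemma of_searching_step (hw : ¬S.waiting) (h : ¬(step ch S).waiting) :
    query ch S = none ∧ (step ch S).base = S.base ∧ (step ch S).fresh = S.fresh + 1 := by
  unfold step at *
  split at h <;> split at h <;> simp_all

lemma of_leaving_step (hw : S.waiting) (h : ¬(step ch S).waiting) :
    ∃ v, answer S = some v ∧ (step ch S).fresh = S.fresh + 1 ∧
      (step ch S).trace.getLastD none = if v = 0 then some (Nat.pair 0 S.fresh) else none := by
  unfold step at *
  split at h <;> split at h <;> simp_all

lemma of_emitting_step {x : ℕ} (h : (step ch S).trace.getLastD none = some x) :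
    x = Nat.pair 0 S.fresh ∧ (step ch S).fresh = S.fresh + 1 := by
  unfold step at *
  split at h <;> split at h <;> simp_all

end Step

section Run

variable (ch : Code) (E : ℕ)

lemma run_succ (t : ℕ) : run ch E (t + 1) = step ch (run ch E t) :=
  Function.iterate_succ_apply' _ _ _

lemma text_zero : text ch E 0 = some (Nat.pair 1 E) := rfl

lemma trace_run (t : ℕ) : (run ch E t).trace = initSeg (text ch E) (t + 1) := by
  induction t with
  | zero => rfl
  | succ t ih =>
    obtain ⟨a, ha⟩ := step_trace (ch := ch) (S := run ch E t)
    have hT : text ch E (t + 1) = a := by simp [text, run_succ, ha]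
    rw [run_succ, ha, ih, ← hT, initSeg, initSeg, List.range_succ (n := t + 1),
      List.map_append, List.map_singleton]

lemma take_trace_run {t i : ℕ} (hi : i ≤ t + 1) :
    (run ch E t).trace.take i = initSeg (text ch E) i := by
  rw [trace_run, initSeg, initSeg, ← List.map_take, List.take_range, min_eq_left hi]

lemma length_trace_run (t : ℕ) : (run ch E t).trace.length = t + 1 := by
  simp [trace_run, initSeg]

lemma monotone_fresh : Monotone fun t => (run ch E t).fresh :=
  monotone_nat_of_le_succ fun t => by simpa only [run_succ] using fresh_le_fresh_step

lemma monotone_base : Monotone fun t => (run ch E t).base :=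
  monotone_nat_of_le_succ fun t => by simpa only [run_succ] using base_le_base_step

lemma text_succ_eq_some {s x : ℕ} (h : text ch E (s + 1) = some x) :
    x = Nat.pair 0 (run ch E s).fresh ∧ (run ch E (s + 1)).fresh = (run ch E s).fresh + 1 := by
  rw [text, run_succ] at h
  rw [run_succ]
  exact of_emitting_step h

lemma hyp_mem_eval {t : ℕ} (hw : (run ch E t).waiting) :
    (run ch E t).hyp ∈ eval ch (Encodable.encode (initSeg (text ch E) (run ch E t).base)) := by
  induction t with
  | zero => simp [run, start] at hw
  | succ t ih =>
    rw [run_succ] at hw ⊢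
    rcases of_waiting_step hw with ⟨hw', -, hhyp, hbase, -⟩ | ⟨-, hq, hbase⟩
    · rw [hhyp, hbase]
      exact ih hw'
    · obtain ⟨-, hev⟩ := query_eq_some_iff.1 hq
      rw [hbase, ← take_trace_run ch E (by
        simpa [length_trace_run] using Nat.unpair_left_le (run ch E t).trace.length)]
      exact evaln_sound hev

lemma mem_content_text_iff {t x : ℕ} (hx : x < (run ch E t).fresh) :
    x ∈ content (text ch E) ↔ some x ∈ (run ch E t).trace := by
  rw [trace_run, initSeg, List.mem_map]
  constructor
  · rintro ⟨n, hn⟩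
    refine ⟨n, List.mem_range.2 ?_, hn⟩
    cases n with
    | zero => omega
    | succ s =>
      obtain ⟨rfl, -⟩ := text_succ_eq_some ch E hn
      have : s < t := (monotone_fresh ch E).reflect_lt
        ((Nat.right_le_pair _ _).trans_lt hx)
      omega
  · rintro ⟨n, -, hn⟩
    exact ⟨n, hn⟩

lemma pair_fresh_mem_content_iff {u : ℕ}
    (hu : (run ch E (u + 1)).fresh = (run ch E u).fresh + 1) :
    Nat.pair 0 (run ch E u).fresh ∈ content (text ch E) ↔
      text ch E (u + 1) = some (Nat.pair 0 (run ch E u).fresh) := by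
  refine ⟨fun ⟨n, hn⟩ => ?_, fun h => ⟨u + 1, h⟩⟩
  cases n with
  | zero =>
    rw [text_zero, Option.some_inj] at hn
    simpa using congrArg (fun z => (Nat.unpair z).1) hn
  | succ s =>
    obtain ⟨hx, hs⟩ := text_succ_eq_some ch E hn
    have hsu : (run ch E s).fresh = (run ch E u).fresh := by
      simpa using (congrArg (fun z => (Nat.unpair z).2) hx).symm
    have hmono := monotone_fresh ch E
    rcases lt_trichotomy s u with h | rfl | h
    · have := hmono (show s + 1 ≤ u by omega); simp only at this; omega
    · exact hn
    · have := hmono (show u + 1 ≤ s by omega); simp only at this; omega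

lemma cset_hyp_ne_content {u : ℕ} (hw : (run ch E u).waiting)
    (hl : ¬(run ch E (u + 1)).waiting) (hc : CIndex (run ch E u).hyp) :
    Cset (run ch E u).hyp ≠ content (text ch E) := by
  rw [run_succ] at hl
  obtain ⟨v, hv, hfresh, hlast⟩ := of_leaving_step hw hl
  rw [← run_succ] at hfresh
  have hmem := pair_fresh_mem_content_iff ch E hfresh
  have hval : v ∈ phi (run ch E u).hyp (Nat.pair 0 (run ch E u).fresh) := evaln_sound hv
  have htext : text ch E (u + 1) =
      if v = 0 then some (Nat.pair 0 (run ch E u).fresh) else none := by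
    rw [text, run_succ, hlast]
  intro heq
  rw [← heq] at hmem
  change phi _ _ = Part.some 1 ↔ _ at hmem
  by_cases hv0 : v = 0
  · rw [if_pos hv0] at htext
    rw [hmem.2 htext, hv0] at hval
    simp at hval
  · rw [if_neg hv0] at htext
    rcases hc (Nat.pair 0 (run ch E u).fresh) with h | h
    · rw [h, Part.mem_some_iff] at hval
      exact hv0 hval
    · simp [htext] at hmem
      exact hmem h

lemma eval_eq_none_of_forall_searching {t₀ : ℕ}
    (hs : ∀ t, t₀ ≤ t → ¬(run ch E t).waiting) {i : ℕ} (hi : (run ch E t₀).base < i) :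
    eval ch (Encodable.encode (initSeg (text ch E) i)) = Part.none := by
  have hbase : ∀ t, t₀ ≤ t → (run ch E t).base = (run ch E t₀).base := by
    intro t ht
    induction t, ht using Nat.le_induction with
    | base => rfl
    | succ t ht ih =>
      have hs' := hs (t + 1) (by omega)
      rw [run_succ] at hs' ⊢
      rw [(of_searching_step (hs t ht) hs').2.1, ih]
  refine Part.eq_none_iff.2 fun c hc => ?_
  obtain ⟨k, hk⟩ := evaln_complete.1 hc
  -- at step `t`, the trace has length `⟨i, s⟩`, so the search queries the first `i` data
  set s := max k (t₀ + 1)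
  set t := Nat.pair i s - 1
  have hlen : (run ch E t).trace.length = Nat.pair i s := by
    rw [length_trace_run]; have := Nat.right_le_pair i s; omega
  have ht₀ : t₀ ≤ t := by have := Nat.right_le_pair i s; omega
  have hq : query ch (run ch E t) = some c := by
    refine query_eq_some_iff.2 ⟨?_, ?_⟩
    · rw [hlen, Nat.unpair_pair, hbase t ht₀]; exact hi
    · rw [hlen, Nat.unpair_pair, take_trace_run ch E (by have := Nat.left_le_pair i s; omega)]
      exact evaln_mono (le_max_left _ _) hk
  have hs' := hs (t + 1) (by omega)
  rw [run_succ] at hs'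
  simp [(of_searching_step (hs t ht₀) hs').1] at hq

lemma base_lt_base_of_searching_of_waiting {t t' : ℕ} (hs : ¬(run ch E t).waiting)
    (hw : (run ch E t').waiting) (htt' : t ≤ t') : (run ch E t).base < (run ch E t').base := by
  suffices ∀ u, t ≤ u → (run ch E t).base < (run ch E u).base ∨ ¬(run ch E u).waiting from
    (this t' htt').resolve_right (not_not.2 hw)
  intro u hu
  induction u, hu using Nat.le_induction with
  | base => exact Or.inr hs
  | succ u hu ih =>
    rcases ih with hlt | hsu
    · exact Or.inl (hlt.trans_le (monotone_base ch E (Nat.le_succ u)))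
    by_cases hwu : (run ch E (u + 1)).waiting
    · rw [run_succ] at hwu ⊢
      obtain ⟨-, hq, hbase⟩ := (of_waiting_step hwu).resolve_left fun h => hsu h.1
      refine Or.inl ((monotone_base ch E hu).trans_lt ?_)
      rw [hbase]
      exact (query_eq_some_iff.1 hq).1
    · exact Or.inr hwu

lemma content_text_mem_selfNamingClass
    (hE : ∀ x, phi E x = Part.some ((content (text ch E)).indicator 1 x)) :
    content (text ch E) ∈ selfNamingClass := by
  obtain ⟨hC, hset⟩ := cIndex_and_cset_eq_of_phi_eq_indicator hE
  refine ⟨E, hC, hset, ⟨0, text_zero ch E⟩, ?_⟩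
  rintro x ⟨n, hn⟩ hx
  cases n with
  | zero => exact Option.some_inj.1 (hn.symm.trans (text_zero ch E))
  | succ s =>
    obtain ⟨rfl, -⟩ := text_succ_eq_some ch E hn
    simp at hx

end Run

def decision (E x : ℕ) : Part ℕ :=
  (Nat.rfind fun t => Part.some (decide (x < (run ch E t).fresh))).map
    fun t => if some x ∈ (run ch E t).trace then 1 else 0

lemma partrec₂_decision :
    Partrec₂ fun (c : Code) x => decision ch (Encodable.encode c) x := by
  have hrun : Primrec₂ fun (p : Code × ℕ) (t : ℕ) => run ch (Encodable.encode p.1) t :=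
    (primrec_run ch).comp (Primrec.encode.comp (Primrec.fst.comp Primrec.fst)) Primrec.snd
  have hsearch : Partrec₂ fun (p : Code × ℕ) (t : ℕ) =>
      Part.some (decide (p.2 < (run ch (Encodable.encode p.1) t).fresh)) := by
    have h : Primrec₂ fun (p : Code × ℕ) (t : ℕ) =>
        decide (p.2 < (run ch (Encodable.encode p.1) t).fresh) :=
      (Primrec.nat_lt.comp (Primrec.snd.comp Primrec.fst) (primrec_fresh.comp hrun)).decide
    exact h.to_comp.partrec₂
  have hmem : Primrec₂ fun (p : Code × ℕ) (t : ℕ) =>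
      if some p.2 ∈ (run ch (Encodable.encode p.1) t).trace then 1 else 0 := by
    have htrace : Primrec₂ fun (p : Code × ℕ) (t : ℕ) => (run ch (Encodable.encode p.1) t).trace :=
      primrec_trace.comp hrun
    have hx : Primrec fun q : (Code × ℕ) × ℕ => some q.1.2 :=
      Primrec.option_some.comp (Primrec.snd.comp Primrec.fst)
    refine Primrec.ite (PrimrecPred.of_eq (Primrec.nat_lt.comp
      (Primrec.list_idxOf.comp hx htrace) (Primrec.list_length.comp htrace))
      fun _ => @List.idxOf_lt_length_iff _ instBEqOfDecidableEq _ _ _)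
      (Primrec.const 1) (Primrec.const 0)
  exact (Partrec.rfind hsearch).map hmem.to_comp

section Learner

variable {ch} {E : ℕ}
variable (hCI : ∀ i c, c ∈ eval ch (Encodable.encode (initSeg (text ch E) i)) → CIndex c)
include hCI

lemma exists_leaving {t : ℕ} (hw : (run ch E t).waiting) :
    ∃ u, t ≤ u ∧ (run ch E u).waiting ∧ ¬(run ch E (u + 1)).waiting := by
  by_contra! hno
  have hstay : ∀ u, t ≤ u → (run ch E u).waiting ∧ (run ch E u).hyp = (run ch E t).hyp ∧
      (run ch E u).fresh = (run ch E t).fresh := by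
    intro u hu
    induction u, hu using Nat.le_induction with
    | base => exact ⟨hw, rfl, rfl⟩
    | succ u hu ih =>
      have hw' := hno u hu ih.1
      rw [run_succ] at hw' ⊢
      obtain ⟨-, -, hhyp, -, hfresh⟩ := (of_waiting_step hw').resolve_right fun h => h.1 ih.1
      exact ⟨hw', hhyp.trans ih.2.1, hfresh.trans ih.2.2⟩
  obtain ⟨v, hv⟩ := Part.dom_iff_mem.1
    ((hCI _ _ (hyp_mem_eval ch E hw)).dom (Nat.pair 0 (run ch E t).fresh))
  obtain ⟨k, hk⟩ := evaln_complete.1 hv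
  obtain ⟨hwu, hhyp, hfresh⟩ := hstay (max t k) (le_max_left _ _)
  have hanswer : answer (run ch E (max t k)) = some v := by
    rw [answer, hhyp, hfresh, length_trace_run]
    exact evaln_mono (by omega) hk
  have hwu' := hno _ (le_max_left _ _) hwu
  rw [run_succ] at hwu'
  rcases of_waiting_step hwu' with ⟨-, hnone, -⟩ | ⟨hs, -⟩
  · simp [hanswer] at hnone
  · exact hs hwu

lemma exists_fresh_succ (t : ℕ) :
    ∃ w, t ≤ w ∧ (run ch E (w + 1)).fresh = (run ch E w).fresh + 1 := by
  have leave {t'} (ht' : t ≤ t') (hw : (run ch E t').waiting) :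
      ∃ w, t ≤ w ∧ (run ch E (w + 1)).fresh = (run ch E w).fresh + 1 := by
    obtain ⟨u, hu, hwu, hl⟩ := exists_leaving hCI hw
    rw [run_succ] at hl
    obtain ⟨-, -, hfresh, -⟩ := of_leaving_step hwu hl
    exact ⟨u, ht'.trans hu, by rw [run_succ]; exact hfresh⟩
  by_cases hw : (run ch E t).waiting
  · exact leave le_rfl hw
  by_cases hw' : (run ch E (t + 1)).waiting
  · exact leave (Nat.le_succ t) hw'
  rw [run_succ] at hw'
  exact ⟨t, le_rfl, by rw [run_succ]; exact (of_searching_step hw hw').2.2⟩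

lemma exists_lt_fresh (y : ℕ) : ∃ t, y < (run ch E t).fresh := by
  induction y with
  | zero =>
    obtain ⟨w, -, hw⟩ := exists_fresh_succ hCI 0
    exact ⟨w + 1, by omega⟩
  | succ y ih =>
    obtain ⟨t, ht⟩ := ih
    obtain ⟨w, htw, hw⟩ := exists_fresh_succ hCI t
    exact ⟨w + 1, by have := monotone_fresh ch E htw; simp only at this; omega⟩

lemma decision_eq_indicator (x : ℕ) :
    decision ch E x = Part.some ((content (text ch E)).indicator 1 x) := by
  have hdom : (Nat.rfind fun t => Part.some (decide (x < (run ch E t).fresh))).Dom := by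
    obtain ⟨t, ht⟩ := exists_lt_fresh hCI x
    exact Nat.rfind_dom.2 ⟨t, by simpa using ht, fun _ => trivial⟩
  obtain ⟨t, ht⟩ := Part.dom_iff_mem.1 hdom
  have hspec : x < (run ch E t).fresh := by simpa using Nat.rfind_spec ht
  rw [decision, Part.eq_some_iff, Part.mem_map_iff]
  refine ⟨t, ht, ?_⟩
  by_cases hx : x ∈ content (text ch E)
  · simp [hx, (mem_content_text_iff ch E hspec).1 hx]
  · simp [hx, mt (mem_content_text_iff ch E hspec).2 hx]

lemma exists_waiting_le_base (hinf : ∀ t, ∃ u, t ≤ u ∧ (run ch E u).waiting) (N : ℕ) :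
    ∃ u, (run ch E u).waiting ∧ N ≤ (run ch E u).base := by
  induction N with
  | zero =>
    obtain ⟨u, -, hu⟩ := hinf 0
    exact ⟨u, hu, Nat.zero_le _⟩
  | succ N ih =>
    obtain ⟨u, hu, hN⟩ := ih
    obtain ⟨w, huw, -, hl⟩ := exists_leaving hCI hu
    obtain ⟨u', hwu', hu'⟩ := hinf (w + 1)
    have := base_lt_base_of_searching_of_waiting ch E hl hu' hwu'
    have := monotone_base ch E (show u ≤ w + 1 by omega)
    exact ⟨u', hu', by simp only at this; omega⟩

lemma exists_incorrect_hypothesis (N : ℕ) : ∃ i, N ≤ i ∧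
    ∀ c ∈ eval ch (Encodable.encode (initSeg (text ch E) i)),
      ¬(CIndex c ∧ Cset c = content (text ch E)) := by
  by_cases hfin : ∃ t₀, ∀ t, t₀ ≤ t → ¬(run ch E t).waiting
  · obtain ⟨t₀, hs⟩ := hfin
    refine ⟨max N ((run ch E t₀).base + 1), le_max_left _ _, fun c hc => ?_⟩
    rw [eval_eq_none_of_forall_searching ch E hs (by omega)] at hc
    exact absurd hc (Part.notMem_none c)
  · push Not at hfin
    obtain ⟨u, hu, hN⟩ := exists_waiting_le_base hCI hfin N
    obtain ⟨w, huw, hw, hl⟩ := exists_leaving hCI hu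
    refine ⟨(run ch E w).base, hN.trans (monotone_base ch E huw), fun c hc ⟨hC, hset⟩ => ?_⟩
    obtain rfl := Part.mem_unique (hyp_mem_eval ch E hw) hc
    exact cset_hyp_ne_content ch E hw hl hC hset

end Learner

end Generator

open Generator in
theorem selfNamingClass_not_mem_tauLearnableREC :
    selfNamingClass ∉ TauLearnableREC PartComputable CIndRes Gop BcC := by
  rintro ⟨-, h, hh, hCInd, hLearn⟩
  obtain ⟨ch, rfl⟩ := exists_code.1 hh
  obtain ⟨c₀, hc₀⟩ := fixed_point₂ (partrec₂_decision ch)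
  set E := Encodable.encode c₀
  have hCI : ∀ i c, c ∈ eval ch (Encodable.encode (initSeg (text ch E) i)) → CIndex c :=
    fun i c hc => hCInd (text ch E) i c (Part.eq_some_iff.2 hc)
  have hE : ∀ x, phi E x = Part.some ((content (text ch E)).indicator 1 x) := fun x => by
    rw [phi, Denumerable.ofNat_encode, hc₀]
    exact decision_eq_indicator hCI x
  obtain ⟨n₀, hBc⟩ := hLearn _ (content_text_mem_selfNamingClass ch E hE) (text ch E) rfl
  obtain ⟨i, hi, hwrong⟩ := exists_incorrect_hypothesis hCI n₀
  obtain ⟨e, he, hCe, hset⟩ := hBc i hi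
  exact hwrong e (Part.eq_some_iff.1 he) ⟨hCe, hset⟩

/-- There is a class of recursive languages in `[ℛTxtTdCIndEx_C]_REC` but not
in `[τ(CInd)TxtGBc_C]_REC`. -/
theorem total_td_cind_not_tau_cind_g_bcC :
    ∃ ℒ : Set (Set ℕ),
      ℒ ∈ LearnableREC TotalComputable Tdop (andRes CIndRes ExC) ∧
      ℒ ∉ TauLearnableREC PartComputable CIndRes Gop BcC :=
  ⟨selfNamingClass, selfNamingClass_mem_learnableREC, selfNamingClass_not_mem_tauLearnableREC⟩

end InductiveInference
end

section
/- There exists a class ℒ of recursive languages such that ℒ ∈ [τ(CInd)TxtSdEx_C]_REC but ℒ ∉ [TxtItEx_W]_REC; that is, some partial computable set-driven learner that outputs only C-indices on all inputs Ex_C-learns every member of ℒ, but no partial computable iterative learner Ex_W-learns every member of ℒ. -/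
namespace InductiveInference

/-!
The class consists of the even numbers together with all finite sets containing an odd number.
A set-driven learner conjectures the data seen so far once an odd number has appeared, and the
even numbers before that; it only ever outputs indices of decision procedures.

An iterative learner that learns the even numbers has, by a diagonal argument, a finite sequence
`σ` after which no further even datum changes its hypothesis. Choose an even `x₀` not in `σ`.
Then `σ, 1, #, #, …` and `σ, x₀, 1, #, #, …` drive the learner through the same hypotheses,
although they are texts for two different finite sets of the class.
-/

def evens : Set ℕ := {x | Even x}

def evensOrFiniteWithOdd : Set (Set ℕ) := insert evens {F | F.Finite ∧ ∃ x ∈ F, Odd x}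

section Computability

theorem primrecPred_even : PrimrecPred (Even : ℕ → Prop) :=
  (Primrec.eq.comp (Primrec.nat_mod.comp Primrec.id (Primrec.const 2)) (Primrec.const 0)).of_eq
    fun _ => Nat.even_iff.symm

theorem primrecRel_mem_list {α : Type*} [Primcodable α] :
    PrimrecRel fun (l : List α) (x : α) => x ∈ l :=
  (PrimrecRel.exists_mem_list Primrec.eq).of_eq fun _ _ => by simp

theorem recLang_of_computablePred {L : Set ℕ} (hL : ComputablePred (· ∈ L)) : RecLang L := by
  obtain ⟨_, hf⟩ := hL
  exact ⟨_, hf, fun x => (decide_eq_true_iff).symm⟩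

theorem recLang_of_finite {L : Set ℕ} (hL : L.Finite) : RecLang L :=
  recLang_of_computablePred <| PrimrecPred.computablePred <|
    (primrecRel_mem_list.comp (Primrec.const hL.toFinset.toList) Primrec.id).of_eq fun _ => by simp

theorem exists_computable_cIndex {R : ℕ → ℕ → Prop}
    (hR : ComputablePred fun p : ℕ × ℕ => R p.1 p.2) :
    ∃ idx : ℕ → ℕ, Computable idx ∧ ∀ m, CIndex (idx m) ∧ Cset (idx m) = {x | R m x} := by
  classical
  let χ : ℕ → ℕ := fun n => if R n.unpair.1 n.unpair.2 then 1 else 0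
  have hχ : Computable χ :=
    ((Computable.cond (hR.decide.comp Computable.unpair) (Computable.const 1)
      (Computable.const 0)).of_eq fun n => by simp [χ, Bool.cond_decide])
  obtain ⟨c, hc⟩ := Nat.Partrec.Code.exists_code.1 (Partrec.nat_iff.1 hχ)
  obtain ⟨curry, hcurry, hsmn⟩ := Nat.Partrec.Code.smn
  have hphi : ∀ m x, phi (Encodable.encode (curry c m)) x = Part.some (if R m x then 1 else 0) :=
    fun m x => by simp [phi, hsmn, hc, χ]
  refine ⟨fun m => Encodable.encode (curry c m),
    Computable.encode.comp (hcurry.comp (Computable.const c) Computable.id), fun m => ⟨?_, ?_⟩⟩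
  · intro x
    by_cases hx : R m x <;> simp [hphi, hx]
  · ext x
    by_cases hx : R m x <;> simp [Cset, hphi, hx]

theorem isRecClass_evensOrFiniteWithOdd : IsRecClass evensOrFiniteWithOdd := by
  rintro L (rfl | ⟨hfin, -⟩)
  · exact recLang_of_computablePred primrecPred_even.computablePred
  · exact recLang_of_finite hfin

end Computability

section SetDriven

open Filter

def decodeFinset (m : ℕ) : Finset ℕ := (Denumerable.ofNat (List ℕ) m).toFinset

theorem decodeFinset_setCode (D : Finset ℕ) : decodeFinset (setCode D) = D := by
  simp [decodeFinset, setCode]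

def conjSet (m : ℕ) : Set ℕ :=
  if ∃ a ∈ decodeFinset m, Odd a then decodeFinset m else evens

/-- Codes of sets without an odd element are normalised to `setCode ∅`, so that the learner
converges syntactically on texts for `evens`. -/
def conjCode (m : ℕ) : ℕ :=
  if ∃ a ∈ decodeFinset m, Odd a then m else setCode ∅

theorem primrecPred_exists_odd_decodeFinset : PrimrecPred fun m => ∃ a ∈ decodeFinset m, Odd a :=
  ((PrimrecPred.exists_mem_list (primrecPred_even.not.of_eq fun _ => Nat.not_even_iff_odd)).comp
    (Primrec.ofNat _)).of_eq fun _ => by simp [decodeFinset]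

theorem computablePred_mem_conjSet : ComputablePred fun p : ℕ × ℕ => p.2 ∈ conjSet p.1 := by
  have hodd : PrimrecPred fun p : ℕ × ℕ => ∃ a ∈ decodeFinset p.1, Odd a :=
    primrecPred_exists_odd_decodeFinset.comp Primrec.fst
  have hmem : PrimrecPred fun p : ℕ × ℕ => p.2 ∈ Denumerable.ofNat (List ℕ) p.1 :=
    primrecRel_mem_list.comp ((Primrec.ofNat _).comp Primrec.fst) Primrec.snd
  refine PrimrecPred.computablePred ((PrimrecPred.or (hodd.and hmem)
    (hodd.not.and (primrecPred_even.comp Primrec.snd))).of_eq fun p => ?_)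
  by_cases h : ∃ a ∈ Denumerable.ofNat (List ℕ) p.1, Odd a <;>
    simp [conjSet, decodeFinset, evens, h]

theorem computable_conjCode : Computable conjCode :=
  (Primrec.ite primrecPred_exists_odd_decodeFinset Primrec.id (Primrec.const _)).to_comp

theorem mem_fincontent {T : Text} {n x : ℕ} : x ∈ fincontent T n ↔ ∃ k < n, T k = some x := by
  simp [fincontent, initSeg]

theorem coe_fincontent_subset (T : Text) (n : ℕ) : (fincontent T n : Set ℕ) ⊆ content T :=
  fun _ hx => (mem_fincontent.1 hx).imp fun _ hk => hk.2

theorem eventually_coe_fincontent_eq {T : Text} (hfin : (content T).Finite) :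
    ∀ᶠ n in atTop, (fincontent T n : Set ℕ) = content T := by
  have hall : ∀ᶠ n in atTop, ∀ x ∈ content T, x ∈ fincontent T n :=
    (eventually_all_finite hfin).2 fun x ⟨k, hk⟩ =>
      (eventually_gt_atTop k).mono fun _ hn => mem_fincontent.2 ⟨k, hn, hk⟩
  exact hall.mono fun n hn => (coe_fincontent_subset T n).antisymm hn

theorem exists_eventually_conjCode_eq {T : Text} (hT : content T ∈ evensOrFiniteWithOdd) :
    ∃ c, conjSet c = content T ∧
      ∀ᶠ n in atTop, conjCode (setCode (fincontent T n)) = c := by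
  rcases hT with hT | ⟨hfin, z, hz, hodd⟩
  · have hnoOdd : ∀ D : Finset ℕ, ↑D ⊆ content T → ¬∃ a ∈ D, Odd a := by
      rintro D hD ⟨a, ha, hodd⟩
      exact Nat.not_even_iff_odd.2 hodd (hT ▸ hD ha : a ∈ evens)
    refine ⟨setCode ∅, ?_, Eventually.of_forall fun n => ?_⟩
    · simp [conjSet, decodeFinset_setCode, hT]
    · simp [conjCode, decodeFinset_setCode, hnoOdd _ (coe_fincontent_subset T n)]
  · have hodd' : ∃ a ∈ hfin.toFinset, Odd a := ⟨z, hfin.mem_toFinset.2 hz, hodd⟩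
    refine ⟨setCode hfin.toFinset, ?_, (eventually_coe_fincontent_eq hfin).mono fun n hn => ?_⟩
    · rw [conjSet, decodeFinset_setCode, if_pos hodd', hfin.coe_toFinset]
    · have hD : fincontent T n = hfin.toFinset := by ext; simp [← hn]
      rw [conjCode, hD, decodeFinset_setCode, if_pos hodd']

theorem exC_of_eventually_eq {p : HypSeq} {T : Text} {e : ℕ}
    (hp : ∀ᶠ n in atTop, p n = Part.some e) (he : CIndex e) (hC : Cset e = content T) :
    ExC p T := by
  obtain ⟨N, hN⟩ := eventually_atTop.1 hp
  exact ⟨N, fun n hn => by rw [hN n hn, hN N le_rfl], e, hN N le_rfl, he, hC⟩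

theorem evensOrFiniteWithOdd_mem_tauLearnableREC :
    evensOrFiniteWithOdd ∈ TauLearnableREC PartComputable CIndRes Sdop ExC := by
  obtain ⟨idx, hidx, hC⟩ :=
    exists_computable_cIndex (R := fun m x => x ∈ conjSet m) computablePred_mem_conjSet
  refine ⟨isRecClass_evensOrFiniteWithOdd, fun m => Part.some (idx (conjCode m)),
    Partrec.nat_iff.1 (hidx.comp computable_conjCode), ?_, ?_⟩
  · rintro T i e he
    obtain rfl := Part.some_inj.1 he
    exact (hC _).1
  · rintro L hL T rfl
    obtain ⟨c, hc, hev⟩ := exists_eventually_conjCode_eq hL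
    refine exC_of_eventually_eq (e := idx c) (hev.mono fun n hn => ?_) (hC c).1 ?_
    · simp only [Sdop, hn]
    · rw [(hC c).2, ← hc]
      rfl

end SetDriven

section Iterative

def itHyp (h : Learner) (l : List (Option ℕ)) : Part ℕ :=
  l.foldl (fun p a => p.bind fun e => h (Encodable.encode (some (e, a) : Option (ℕ × Option ℕ))))
    (h (Encodable.encode (none : Option (ℕ × Option ℕ))))

theorem initSeg_succ (T : Text) (n : ℕ) : initSeg T (n + 1) = initSeg T n ++ [T n] := by
  simp [initSeg, List.range_succ]

theorem Itop_eq_itHyp (h : Learner) (T : Text) (n : ℕ) : Itop h T n = itHyp h (initSeg T n) := by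
  induction n with
  | zero => rfl
  | succ n ih => rw [Itop, ih, initSeg_succ, itHyp, itHyp, List.foldl_append]; rfl

theorem itHyp_append_congr {h : Learner} {l₁ l₂ : List (Option ℕ)} (hl : itHyp h l₁ = itHyp h l₂)
    (r : List (Option ℕ)) : itHyp h (l₁ ++ r) = itHyp h (l₂ ++ r) := by
  simp only [itHyp, List.foldl_append] at hl ⊢
  rw [hl]

def padText (l : List (Option ℕ)) : Text := fun n => l.getD n none

theorem content_padText (l : List (Option ℕ)) : content (padText l) = {x | some x ∈ l} := by
  ext x
  simp only [content, padText, List.getD_eq_getElem?_getD]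
  constructor
  · rintro ⟨n, hn⟩
    obtain ⟨a, ha, rfl⟩ : ∃ a, l[n]? = some a ∧ a = some x := by
      cases hl : l[n]? <;> simp_all
    exact List.mem_of_getElem? ha
  · intro hx
    obtain ⟨n, hn, hl⟩ := List.getElem_of_mem hx
    exact ⟨n, by simp [hl, List.getElem?_eq_getElem hn]⟩

theorem finite_content_padText (l : List (Option ℕ)) : (content (padText l)).Finite :=
  content_padText l ▸ (List.finite_toSet l).preimage (Option.some_injective ℕ).injOn

theorem initSeg_padText (l : List (Option ℕ)) (m : ℕ) :
    initSeg (padText l) (l.length + m) = l ++ List.replicate m none := by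
  induction m with
  | zero =>
    apply List.ext_getElem (by simp [initSeg])
    intro n _ hn
    simp only [List.append_nil, List.replicate_zero] at hn
    simp [initSeg, padText, hn]
  | succ m ih =>
    rw [← add_assoc, initSeg_succ, ih, List.replicate_succ', ← List.append_assoc]
    simp [padText]

/-- After `l₁` and `l₂` the learner sees the same data, so it converges to the same hypothesis on
both padded texts. -/
theorem content_padText_eq_of_itHyp_eq {h : Learner} {l₁ l₂ : List (Option ℕ)}
    (hst : itHyp h l₁ = itHyp h l₂) (h₁ : ExW (Itop h (padText l₁)) (padText l₁))
    (h₂ : ExW (Itop h (padText l₂)) (padText l₂)) :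
    content (padText l₁) = content (padText l₂) := by
  obtain ⟨n₁, hc₁, e₁, he₁, hW₁⟩ := h₁
  obtain ⟨n₂, hc₂, e₂, he₂, hW₂⟩ := h₂
  have hsame : Itop h (padText l₁) (l₁.length + (n₁ + n₂)) =
      Itop h (padText l₂) (l₂.length + (n₁ + n₂)) := by
    rw [Itop_eq_itHyp, Itop_eq_itHyp, initSeg_padText, initSeg_padText,
      itHyp_append_congr hst]
  rw [hc₁ _ (by omega), hc₂ _ (by omega), he₁, he₂, Part.some_inj] at hsame
  rw [← hW₁, ← hW₂, hsame]

def interleaveStep (T : Text) (f : List (Option ℕ) → ℕ) (n : ℕ) (l : List (Option ℕ)) :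
    Option ℕ :=
  if n % 2 = 0 then T (n / 2) else some (f l)

def interleavePrefix (T : Text) (f : List (Option ℕ) → ℕ) : ℕ → List (Option ℕ)
  | 0 => []
  | n + 1 => interleavePrefix T f n ++ [interleaveStep T f n (interleavePrefix T f n)]

def interleave (T : Text) (f : List (Option ℕ) → ℕ) : Text :=
  fun n => interleaveStep T f n (interleavePrefix T f n)

theorem initSeg_interleave (T : Text) (f : List (Option ℕ) → ℕ) (n : ℕ) :
    initSeg (interleave T f) n = interleavePrefix T f n := by
  induction n with
  | zero => rfl
  | succ n ih => rw [initSeg_succ, ih, interleavePrefix, interleave]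

theorem content_interleave {T : Text} {f : List (Option ℕ) → ℕ} (hf : ∀ l, f l ∈ content T) :
    content (interleave T f) = content T := by
  ext x
  constructor
  · rintro ⟨n, hn⟩
    simp only [interleave, interleaveStep] at hn
    split_ifs at hn
    · exact ⟨_, hn⟩
    · exact Option.some_injective _ hn ▸ hf _
  · rintro ⟨k, hk⟩
    exact ⟨2 * k, by simp [interleave, interleaveStep, hk]⟩

/-- Otherwise, feeding `h` alternately with `T₀` and with data that change its state gives a text
for `content T₀` on which `h` changes its hypothesis infinitely often. -/
theorem exists_itHyp_append_eq {h : Learner} (T₀ : Text)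
    (hconv : ∀ T, content T = content T₀ → ∃ n₀, ∀ n, n₀ ≤ n → Itop h T n = Itop h T n₀) :
    ∃ σ, ∀ x ∈ content T₀, itHyp h (σ ++ [some x]) = itHyp h σ := by
  by_contra! hchange
  choose f hfT hf using hchange
  obtain ⟨n₀, hn₀⟩ := hconv _ (content_interleave hfT)
  have hmind : Itop h (interleave T₀ f) (2 * n₀ + 2) ≠ Itop h (interleave T₀ f) (2 * n₀ + 1) := by
    have hodd : (2 * n₀ + 1) % 2 ≠ 0 := by omega
    rw [Itop_eq_itHyp, Itop_eq_itHyp, initSeg_interleave, initSeg_interleave, interleavePrefix,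
      interleaveStep, if_neg hodd]
    exact hf _
  exact hmind ((hn₀ _ (by omega)).trans (hn₀ _ (by omega)).symm)

theorem content_evensText : content (fun n => some (2 * n)) = evens := by
  ext x
  simp [content, evens, even_iff_two_dvd, Dvd.dvd, eq_comm]

theorem infinite_evens : evens.Infinite :=
  Set.infinite_of_forall_exists_gt fun a => ⟨2 * a + 2, ⟨a + 1, by ring⟩, by omega⟩

theorem padText_mem_evensOrFiniteWithOdd {l : List (Option ℕ)} {x : ℕ} (hx : Odd x)
    (hl : some x ∈ l) : content (padText l) ∈ evensOrFiniteWithOdd :=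
  Or.inr ⟨finite_content_padText l, x, content_padText l ▸ hl, hx⟩

theorem not_learns_itExW_evensOrFiniteWithOdd (h : Learner) :
    ¬∀ L ∈ evensOrFiniteWithOdd, Learns Itop ExW h L := by
  intro hlearn
  have hconv : ∀ T, content T = content (fun n => some (2 * n)) →
      ∃ n₀, ∀ n, n₀ ≤ n → Itop h T n = Itop h T n₀ := fun T hT =>
    (hlearn evens (Set.mem_insert _ _) T (hT.trans content_evensText)).imp fun _ hex => hex.1
  obtain ⟨σ, hσ⟩ := exists_itHyp_append_eq _ hconv
  obtain ⟨x₀, hx₀, hx₀σ⟩ := infinite_evens.exists_notMem_finite (finite_content_padText σ)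
  have hst : itHyp h (σ ++ [some x₀, some 1]) = itHyp h (σ ++ [some 1]) := by
    simpa using itHyp_append_congr (hσ x₀ (content_evensText ▸ hx₀)) [some 1]
  have heq := content_padText_eq_of_itHyp_eq hst
    (hlearn _ (padText_mem_evensOrFiniteWithOdd odd_one (by simp)) _ rfl)
    (hlearn _ (padText_mem_evensOrFiniteWithOdd odd_one (by simp)) _ rfl)
  have hx₀mem : x₀ ∈ content (padText (σ ++ [some x₀, some 1])) := by simp [content_padText]
  rw [heq, content_padText] at hx₀mem
  simp only [List.mem_append, List.mem_singleton, Option.some.injEq] at hx₀mem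
  rcases hx₀mem with hσmem | rfl
  · exact hx₀σ (content_padText σ ▸ hσmem)
  · exact Nat.not_even_one hx₀

end Iterative

/-- There is a class of recursive languages in `[τ(CInd)TxtSdEx_C]_REC` but
not in `[TxtItEx_W]_REC`. -/
theorem tau_cind_sd_not_it_exW :
    ∃ ℒ : Set (Set ℕ),
      ℒ ∈ TauLearnableREC PartComputable CIndRes Sdop ExC ∧
      ℒ ∉ LearnableREC PartComputable Itop ExW :=
  ⟨evensOrFiniteWithOdd, evensOrFiniteWithOdd_mem_tauLearnableREC,
    fun ⟨_, h, _, hlearn⟩ => not_learns_itExW_evensOrFiniteWithOdd h hlearn⟩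

end InductiveInference
end
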